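/- The clique-lifted hypergraphs of the 4×4 rook's graph and of the Shrikhande graph are not isospectral for the normalized hypergraph Laplacian: the normalized hypergraph Laplacian of the rook lifting has trace 12, while that of the Shrikhande lifting has trace 32/3; in particular the two Laplacians do not have the same multiset of eigenvalues. -/

import Mathlib

def rook : SimpleGraph (Fin 4 × Fin 4) where
  Adj u v := u ≠ v ∧ (u.1 = v.1 ∨ u.2 = v.2)
  symm := ⟨fun _ _ h => ⟨h.1.symm, h.2.imp Eq.symm Eq.symm⟩⟩
  loopless := ⟨fun _ h => h.1 rfl⟩

instance : DecidableRel rook.Adj := fun u v =>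
  inferInstanceAs (Decidable (u ≠ v ∧ (u.1 = v.1 ∨ u.2 = v.2)))

/-- The difference set defining the Shrikhande graph. -/
def shrikhandeDiffs : Finset (ZMod 4 × ZMod 4) :=
  {(1, 0), (-1, 0), (0, 1), (0, -1), (1, 1), (-1, -1)}

lemma shrikhandeDiffs_neg : ∀ x ∈ shrikhandeDiffs, -x ∈ shrikhandeDiffs := by decide

def shrikhande : SimpleGraph (ZMod 4 × ZMod 4) where
  Adj u v := u ≠ v ∧ u - v ∈ shrikhandeDiffs
  symm := ⟨fun u v h => ⟨h.1.symm, by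
    have := shrikhandeDiffs_neg _ h.2
    rwa [neg_sub] at this⟩⟩
  loopless := ⟨fun _ h => h.1 rfl⟩

instance : DecidableRel shrikhande.Adj := fun u v =>
  inferInstanceAs (Decidable (u ≠ v ∧ u - v ∈ shrikhandeDiffs))

/-- A maximal clique of a simple graph (as a finite set of vertices): a finset of pairwise
adjacent vertices not properly contained in any other finset of pairwise adjacent vertices. -/
def IsMaxClique {V : Type*} (G : SimpleGraph V) (s : Finset V) : Prop :=
  G.IsClique (s : Set V) ∧ ∀ t : Finset V, G.IsClique (t : Set V) → s ⊆ t → s = t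

/-- The hypergraph degree of a vertex in the clique-lifted hypergraph: the number of
maximal cliques of `G` containing `v`. -/
noncomputable def cliqueDegree {V : Type*} (G : SimpleGraph V) (v : V) : ℕ :=
  {s : Finset V | IsMaxClique G s ∧ v ∈ s}.ncard

open scoped Classical

/-- The hyperedge collection of the clique-lifted hypergraph of `G`: the finset of all
maximal cliques of `G`. -/
noncomputable def maxCliques {V : Type*} [Fintype V] (G : SimpleGraph V) :
    Finset (Finset V) :=
  Finset.univ.filter fun s => IsMaxClique G s

open Matrix

variable {V : Type*} [Fintype V] [DecidableEq V]

/-- The degree of a vertex in a hypergraph with hyperedge collection `E`: the number of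
hyperedges containing `v`. -/
def hdeg (E : Finset (Finset V)) (v : V) : ℕ := (E.filter fun e => v ∈ e).card

/-- The incidence matrix `B ∈ ℝ^{V×E}` of a hypergraph: `B v e = 1` if `v ∈ e`, else `0`. -/
def incidence (E : Finset (Finset V)) : Matrix V {e // e ∈ E} ℝ :=
  Matrix.of fun v e => if v ∈ (e : Finset V) then 1 else 0

/-- The normalized hypergraph Laplacian `Δ = I − D_v^{−1/2} B D_e^{−1} Bᵀ D_v^{−1/2}`, where
`D_v` is the diagonal matrix of vertex degrees and `D_e` the diagonal matrix of hyperedge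
cardinalities. -/
noncomputable def normLap (E : Finset (Finset V)) : Matrix V V ℝ :=
  1 - Matrix.diagonal (fun v => (Real.sqrt (hdeg E v))⁻¹) * incidence E *
        Matrix.diagonal (fun e : {e // e ∈ E} => ((e : Finset V).card : ℝ)⁻¹) *
        (incidence E)ᵀ * Matrix.diagonal (fun v => (Real.sqrt (hdeg E v))⁻¹)

section Aux

lemma maxclique_iff {V : Type*} [DecidableEq V] (G : SimpleGraph V) (s : Finset V) :
    IsMaxClique G s ↔ G.IsClique (s : Set V) ∧ ∀ v, v ∉ s → ∃ u ∈ s, ¬ G.Adj v u := by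
  constructor
  · rintro ⟨hc, hmax⟩
    refine ⟨hc, fun v hv => ?_⟩
    by_contra h
    push_neg at h
    have hins : G.IsClique ((insert v s : Finset V) : Set V) := by
      rw [Finset.coe_insert]
      exact hc.insert fun b hb _ => h b hb
    have := hmax _ hins (Finset.subset_insert _ _)
    exact hv (this ▸ Finset.mem_insert_self v s)
  · rintro ⟨hc, hloc⟩
    refine ⟨hc, fun t ht hst => Finset.Subset.antisymm hst fun v hv => ?_⟩
    by_contra hvs
    obtain ⟨u, hu, hadj⟩ := hloc v hvs
    exact hadj (ht hv (hst hu) fun h => hvs (h ▸ hu))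

lemma isClique_iff' {V : Type*} (G : SimpleGraph V) (s : Finset V) :
    G.IsClique (s : Set V) ↔ ∀ a ∈ s, ∀ b ∈ s, a ≠ b → G.Adj a b := by
  simp [SimpleGraph.isClique_iff, Set.Pairwise]

lemma exists4 {α : Type*} [DecidableEq α] (s : Finset α) (h : 4 ≤ s.card) :
    ∃ a ∈ s, ∃ b ∈ s, ∃ c ∈ s, ∃ d ∈ s,
      a ≠ b ∧ a ≠ c ∧ a ≠ d ∧ b ≠ c ∧ b ≠ d ∧ c ≠ d := by
  obtain ⟨a, ha⟩ : s.Nonempty := Finset.card_pos.mp (show 0 < s.card by omega)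
  obtain ⟨b, hb⟩ := Finset.card_pos.mp
    (show 0 < (s.erase a).card by rw [Finset.card_erase_of_mem ha]; omega)
  obtain ⟨c, hc⟩ := Finset.card_pos.mp
    (show 0 < ((s.erase a).erase b).card by
      rw [Finset.card_erase_of_mem hb, Finset.card_erase_of_mem ha]; omega)
  obtain ⟨d, hd⟩ := Finset.card_pos.mp
    (show 0 < (((s.erase a).erase b).erase c).card by
      rw [Finset.card_erase_of_mem hc, Finset.card_erase_of_mem hb,
        Finset.card_erase_of_mem ha]; omega)
  simp only [Finset.mem_erase] at hb hc hd
  exact ⟨a, ha, b, hb.2, c, hc.2.2, d, hd.2.2.2,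
    fun h => hb.1 h.symm, fun h => hc.2.1 h.symm, fun h => hd.2.2.1 h.symm,
    fun h => hc.1 h.symm, fun h => hd.2.1 h.symm, fun h => hd.1 h.symm⟩

lemma mem_maxCliques {V : Type*} [Fintype V] (G : SimpleGraph V) (s : Finset V) :
    s ∈ maxCliques G ↔ IsMaxClique G s := by
  simp [maxCliques]

/-! ### Rook graph -/

def rowF (a : Fin 4) : Finset (Fin 4 × Fin 4) := Finset.univ.filter (fun p => p.1 = a)
def colF (b : Fin 4) : Finset (Fin 4 × Fin 4) := Finset.univ.filter (fun p => p.2 = b)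

lemma rowF_aux : ∀ a, rook.IsClique ((rowF a : Finset (Fin 4 × Fin 4)) : Set (Fin 4 × Fin 4)) ∧
    ∀ v, v ∉ rowF a → ∃ u ∈ rowF a, ¬ rook.Adj v u := by decide

lemma colF_aux : ∀ b, rook.IsClique ((colF b : Finset (Fin 4 × Fin 4)) : Set (Fin 4 × Fin 4)) ∧
    ∀ v, v ∉ colF b → ∃ u ∈ colF b, ¬ rook.Adj v u := by decide

lemma rowF_max (a : Fin 4) : IsMaxClique rook (rowF a) :=
  (maxclique_iff _ _).mpr (rowF_aux a)

lemma colF_max (b : Fin 4) : IsMaxClique rook (colF b) :=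
  (maxclique_iff _ _).mpr (colF_aux b)

lemma fin4_succ_ne : ∀ x : Fin 4, x + 1 ≠ x := by decide

lemma mem_rowF (p : Fin 4 × Fin 4) (a : Fin 4) : p ∈ rowF a ↔ p.1 = a := by
  simp [rowF]

lemma mem_colF (p : Fin 4 × Fin 4) (b : Fin 4) : p ∈ colF b ↔ p.2 = b := by
  simp [colF]

lemma rook_structure (s : Finset (Fin 4 × Fin 4)) (h : IsMaxClique rook s)
    (v : Fin 4 × Fin 4) (hv : v ∈ s) : s = rowF v.1 ∨ s = colF v.2 := by
  obtain ⟨hc, hloc⟩ := (maxclique_iff _ _).mp h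
  have hcc := (isClique_iff' rook s).mp hc
  have hw : ∃ w ∈ s, w ≠ v := by
    by_contra hcon
    push_neg at hcon
    have hne : ((v.1, v.2 + 1) : Fin 4 × Fin 4) ≠ v := by
      intro h'
      exact fin4_succ_ne v.2 (congrArg Prod.snd h')
    have hnot : ((v.1, v.2 + 1) : Fin 4 × Fin 4) ∉ s := fun hmem => hne (hcon _ hmem)
    obtain ⟨u, hu, hna⟩ := hloc _ hnot
    have huv : u = v := hcon u hu
    subst huv
    exact hna ⟨hne, Or.inl rfl⟩
  obtain ⟨w, hws, hwv⟩ := hw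
  have hadj : rook.Adj v w := hcc v hv w hws (fun h' => hwv h'.symm)
  rcases hadj.2 with h1 | h2
  · left
    have hsub : s ⊆ rowF v.1 := by
      intro u hu
      rw [mem_rowF]
      by_contra hu1
      have huv : u ≠ v := fun h' => hu1 (by rw [h'])
      have huw : u ≠ w := fun h' => hu1 (by rw [h', ← h1])
      have a1 := (hcc u hu v hv huv).2
      have a2 := (hcc u hu w hws huw).2
      rcases a1 with e1 | e1
      · exact hu1 e1
      rcases a2 with e2 | e2
      · exact hu1 (by rw [e2, ← h1])
      exact hwv (Prod.ext h1.symm (by rw [← e1, e2]))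
    exact h.2 (rowF v.1) (rowF_max v.1).1 hsub
  · right
    have hsub : s ⊆ colF v.2 := by
      intro u hu
      rw [mem_colF]
      by_contra hu1
      have huv : u ≠ v := fun h' => hu1 (by rw [h'])
      have huw : u ≠ w := fun h' => hu1 (by rw [h', ← h2])
      have a1 := (hcc u hu v hv huv).2
      have a2 := (hcc u hu w hws huw).2
      rcases a1 with e1 | e1
      · rcases a2 with e2 | e2
        · exact hwv (Prod.ext (by rw [← e1, e2]) h2.symm)
        · exact hu1 (by rw [e2, ← h2])
      · exact hu1 e1
    exact h.2 (colF v.2) (colF_max v.2).1 hsub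

end Aux


lemma rook_nonempty (s : Finset (Fin 4 × Fin 4)) (h : IsMaxClique rook s) : s.Nonempty := by
  rcases s.eq_empty_or_nonempty with rfl | hne
  · obtain ⟨u, hu, -⟩ := ((maxclique_iff _ _).mp h).2 ((0 : Fin 4), (0 : Fin 4))
      (Finset.notMem_empty _)
    exact absurd hu (Finset.notMem_empty u)
  · exact hne

lemma rowF_card : ∀ a, (rowF a).card = 4 := by decide
lemma colF_card : ∀ b, (colF b).card = 4 := by decide
lemma rowF_ne_colF : ∀ v : Fin 4 × Fin 4, rowF v.1 ≠ colF v.2 := by decide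
lemma mem_rowF_self : ∀ v : Fin 4 × Fin 4, v ∈ rowF v.1 := by decide
lemma mem_colF_self : ∀ v : Fin 4 × Fin 4, v ∈ colF v.2 := by decide

lemma rook_card (e : Finset (Fin 4 × Fin 4)) (he : e ∈ maxCliques rook) : e.card = 4 := by
  rw [mem_maxCliques] at he
  obtain ⟨v, hv⟩ := rook_nonempty e he
  rcases rook_structure e he v hv with rfl | rfl
  · exact rowF_card v.1
  · exact colF_card v.2

lemma rook_hdeg (v : Fin 4 × Fin 4) : hdeg (maxCliques rook) v = 2 := by
  have hfil : (maxCliques rook).filter (fun e => v ∈ e) = {rowF v.1, colF v.2} := by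
    ext s
    simp only [Finset.mem_filter, mem_maxCliques, Finset.mem_insert, Finset.mem_singleton]
    constructor
    · rintro ⟨hm, hv⟩
      exact rook_structure s hm v hv
    · rintro (rfl | rfl)
      · exact ⟨rowF_max v.1, mem_rowF_self v⟩
      · exact ⟨colF_max v.2, mem_colF_self v⟩
  rw [hdeg, hfil, Finset.card_insert_of_notMem (by simpa using rowF_ne_colF v),
    Finset.card_singleton]


/-! ### Shrikhande graph -/

set_option maxHeartbeats 4000000 in
lemma noK4 : ∀ a b c d : ZMod 4 × ZMod 4, shrikhande.Adj a b → shrikhande.Adj a c →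
    shrikhande.Adj a d → shrikhande.Adj b c → shrikhande.Adj b d → shrikhande.Adj c d →
    False := by decide

lemma edge_tri : ∀ u v : ZMod 4 × ZMod 4, shrikhande.Adj u v →
    ∃ w, shrikhande.Adj w u ∧ shrikhande.Adj w v := by decide

lemma hasnbr : ∀ v : ZMod 4 × ZMod 4, ∃ w, shrikhande.Adj v w := by decide

def triS (v : ZMod 4 × ZMod 4) : Finset (Finset (ZMod 4 × ZMod 4)) :=
  (Finset.univ.filter fun p : (ZMod 4 × ZMod 4) × (ZMod 4 × ZMod 4) =>
    shrikhande.Adj v p.1 ∧ shrikhande.Adj v p.2 ∧ shrikhande.Adj p.1 p.2).image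
    fun p => ({v, p.1, p.2} : Finset _)

set_option maxHeartbeats 4000000 in
lemma triS_card : ∀ v, (triS v).card = 6 := by decide

lemma tri_isMax (a b c : ZMod 4 × ZMod 4) (hab : shrikhande.Adj a b)
    (hac : shrikhande.Adj a c) (hbc : shrikhande.Adj b c) :
    IsMaxClique shrikhande ({a, b, c} : Finset (ZMod 4 × ZMod 4)) := by
  rw [maxclique_iff]
  constructor
  · rw [isClique_iff']
    intro x hx y hy hxy
    simp only [Finset.mem_insert, Finset.mem_singleton] at hx hy
    rcases hx with rfl | rfl | rfl <;> rcases hy with rfl | rfl | rfl <;>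
      first
        | exact absurd rfl hxy
        | assumption
        | exact hab.symm
        | exact hac.symm
        | exact hbc.symm
  · intro v hv
    by_contra h
    push_neg at h
    exact noK4 v a b c (h a (by simp)) (h b (by simp)) (h c (by simp)) hab hac hbc

lemma shr_card3 (s : Finset (ZMod 4 × ZMod 4)) (h : IsMaxClique shrikhande s) :
    s.card = 3 := by
  obtain ⟨hc, hloc⟩ := (maxclique_iff _ _).mp h
  have hcc := (isClique_iff' shrikhande s).mp hc
  have hle : s.card ≤ 3 := by
    by_contra hgt
    push_neg at hgt
    obtain ⟨a, ha, b, hb, c, hcm, d, hd, hab, hac, had, hbc, hbd, hcd⟩ :=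
      exists4 s (by omega)
    exact noK4 a b c d (hcc a ha b hb hab) (hcc a ha c hcm hac) (hcc a ha d hd had)
      (hcc b hb c hcm hbc) (hcc b hb d hd hbd) (hcc c hcm d hd hcd)
  have hge : ¬ s.card ≤ 2 := by
    intro hle2
    rcases (show s.card = 0 ∨ s.card = 1 ∨ s.card = 2 by omega) with h0 | h1 | h2
    · obtain ⟨u, hu, -⟩ := hloc ((0 : ZMod 4), (0 : ZMod 4))
        (by rw [Finset.card_eq_zero.mp h0]; exact Finset.notMem_empty _)
      rw [Finset.card_eq_zero.mp h0] at hu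
      exact absurd hu (Finset.notMem_empty u)
    · obtain ⟨u, rfl⟩ := Finset.card_eq_one.mp h1
      obtain ⟨w, hw⟩ := hasnbr u
      obtain ⟨x, hx, hna⟩ := hloc w (by simp [hw.ne'])
      rw [Finset.mem_singleton] at hx
      subst hx
      exact hna hw.symm
    · obtain ⟨a, b, hab, rfl⟩ := Finset.card_eq_two.mp h2
      have hadj : shrikhande.Adj a b := hcc a (by simp) b (by simp) hab
      obtain ⟨w, hwa, hwb⟩ := edge_tri a b hadj
      obtain ⟨x, hx, hna⟩ := hloc w (by simp [hwa.ne, hwb.ne])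
      rw [Finset.mem_insert, Finset.mem_singleton] at hx
      rcases hx with rfl | rfl
      · exact hna hwa
      · exact hna hwb
  omega

lemma shr_card (e : Finset (ZMod 4 × ZMod 4)) (he : e ∈ maxCliques shrikhande) :
    e.card = 3 := shr_card3 e ((mem_maxCliques _ _).mp he)

lemma shr_hdeg (v : ZMod 4 × ZMod 4) : hdeg (maxCliques shrikhande) v = 6 := by
  have hfil : (maxCliques shrikhande).filter (fun e => v ∈ e) = triS v := by
    ext s
    simp only [Finset.mem_filter, mem_maxCliques, triS, Finset.mem_image, Finset.mem_univ, true_and]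
    constructor
    · rintro ⟨hm, hv⟩
      have hcc := (isClique_iff' shrikhande s).mp hm.1
      obtain ⟨x, y, z, hxy, hxz, hyz, hs⟩ := Finset.card_eq_three.mp (shr_card3 s hm)
      have hvm : v = x ∨ v = y ∨ v = z := by
        rw [hs] at hv; simpa using hv
      have hx : x ∈ s := by rw [hs]; simp
      have hy : y ∈ s := by rw [hs]; simp
      have hz : z ∈ s := by rw [hs]; simp
      rcases hvm with rfl | rfl | rfl
      · exact ⟨(y, z), ⟨hcc v hx y hy hxy, hcc v hx z hz hxz, hcc y hy z hz hyz⟩,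
          hs.symm⟩
      · refine ⟨(x, z), ⟨(hcc x hx v hy hxy).symm, hcc v hy z hz hyz,
          hcc x hx z hz hxz⟩, ?_⟩
        rw [hs]
        ext t
        simp only [Finset.mem_insert, Finset.mem_singleton]
        tauto
      · refine ⟨(x, y), ⟨(hcc x hx v hz hxz).symm, (hcc y hy v hz hyz).symm,
          hcc x hx y hy hxy⟩, ?_⟩
        rw [hs]
        ext t
        simp only [Finset.mem_insert, Finset.mem_singleton]
        tauto
    · rintro ⟨p, ⟨h1, h2, h3⟩, rfl⟩
      exact ⟨tri_isMax v p.1 p.2 h1 h2 h3, by simp⟩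
  rw [hdeg, hfil, triS_card]


lemma trace_normLap (E : Finset (Finset V)) (k r : ℕ)
    (hk : ∀ e ∈ E, e.card = k) (hr : ∀ v, hdeg E v = r) (hr0 : 0 < r) (hk0 : 0 < k) :
    (normLap E).trace = (Fintype.card V) * (1 - (k : ℝ)⁻¹) := by
  set c : ℝ := (Real.sqrt r)⁻¹ * ((k : ℝ)⁻¹ * (Real.sqrt r)⁻¹) with hc
  have hdiag : ∀ v, normLap E v v = 1 - (k : ℝ)⁻¹ := by
    intro v
    have h1 : (Matrix.diagonal (fun v => (Real.sqrt (hdeg E v))⁻¹) * incidence E *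
        Matrix.diagonal (fun e : {e // e ∈ E} => ((e : Finset V).card : ℝ)⁻¹) *
        (incidence E)ᵀ * Matrix.diagonal (fun v => (Real.sqrt (hdeg E v))⁻¹)) v v
        = ∑ e ∈ E.attach, (if v ∈ (e : Finset V) then c else 0) := by
      rw [Matrix.mul_diagonal, Matrix.mul_apply, Finset.sum_mul]
      refine Finset.sum_congr rfl fun e _ => ?_
      rw [Matrix.mul_diagonal, Matrix.diagonal_mul, Matrix.transpose_apply]
      simp only [incidence, Matrix.of_apply, hr v, hk e e.2, hc]
      split <;> ring
    have h2 : ∑ e ∈ E.attach, (if v ∈ (e : Finset V) then c else 0)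
        = ∑ e ∈ E, (if v ∈ e then c else 0) := Finset.sum_attach E (fun e => if v ∈ e then c else 0)
    have h3 : ∑ e ∈ E, (if v ∈ e then c else 0) = (hdeg E v : ℝ) * c := by
      rw [Finset.sum_ite, Finset.sum_const, Finset.sum_const_zero, add_zero, hdeg,
        nsmul_eq_mul]
    have hs : Real.sqrt r ≠ 0 := by positivity
    have hk' : (k : ℝ) ≠ 0 := Nat.cast_ne_zero.mpr (by omega)
    rw [normLap, Matrix.sub_apply, Matrix.one_apply_eq, h1, h2, h3, hr v, hc]
    rw [show (r : ℝ) * ((Real.sqrt r)⁻¹ * ((k : ℝ)⁻¹ * (Real.sqrt r)⁻¹))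
        = (r : ℝ) * (Real.sqrt r * Real.sqrt r)⁻¹ * (k : ℝ)⁻¹ by rw [mul_inv]; ring]
    rw [Real.mul_self_sqrt (Nat.cast_nonneg r), mul_inv_cancel₀ (by positivity), one_mul]
  rw [Matrix.trace]
  simp only [Matrix.diag]
  rw [Finset.sum_congr rfl fun v _ => hdiag v, Finset.sum_const, Finset.card_univ,
    nsmul_eq_mul]

/-- The clique-lifted hypergraphs of the 4×4 rook's graph and of the Shrikhande graph are
not isospectral for the normalized hypergraph Laplacian: the rook lifting's Laplacian has
trace 12, the Shrikhande lifting's has trace 32/3, and in particular the two Laplacians do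
not have the same multiset of eigenvalues (their characteristic polynomials differ). -/


theorem rook_shrikhande_liftings_not_isospectral :
    (normLap (maxCliques rook)).trace = 12 ∧
    (normLap (maxCliques shrikhande)).trace = 32 / 3 ∧
    (normLap (maxCliques rook)).charpoly ≠ (normLap (maxCliques shrikhande)).charpoly := by
  have hcardR : Fintype.card (Fin 4 × Fin 4) = 16 := by simp
  have hcardS : Fintype.card (ZMod 4 × ZMod 4) = 16 := by simp
  have t1 : (normLap (maxCliques rook)).trace = 12 := by
    rw [trace_normLap (maxCliques rook) 4 2 rook_card (fun v => rook_hdeg v)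
      (by norm_num) (by norm_num), hcardR]
    norm_num
  have t2 : (normLap (maxCliques shrikhande)).trace = 32 / 3 := by
    rw [trace_normLap (maxCliques shrikhande) 3 6 shr_card (fun v => shr_hdeg v)
      (by norm_num) (by norm_num), hcardS]
    norm_num
  refine ⟨t1, t2, fun heq => ?_⟩
  have h1 := Matrix.trace_eq_neg_charpoly_coeff (normLap (maxCliques rook))
  have h2 := Matrix.trace_eq_neg_charpoly_coeff (normLap (maxCliques shrikhande))
  rw [t1, hcardR] at h1
  rw [t2, hcardS, ← heq] at h2
  have h3 := h1.trans h2.symm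
  norm_num at h3
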